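/- For each m ∈ ℕ, the limit η(m) = lim_{N→∞} (1/N) Σ_{i=0}^{N-1} σ(i)σ(i+m) exists, where σ is the Thue-Morse sign sequence. -/
import Mathlib


open Filter Finset

/-- Binary digit-sum of `n`. -/
def digitSum (n : ℕ) : ℕ := (Nat.digits 2 n).sum

/-- The Thue-Morse sign sequence `σ(n) = (-1)^{s(n)}`. -/
def tmSign (n : ℕ) : ℤ := (-1) ^ digitSum n

def S (m N : ℕ) : ℤ := ∑ i ∈ range N, tmSign i * tmSign (i + m)




lemma digitSum_two_mul (n : ℕ) : digitSum (2 * n) = digitSum n := by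
  rcases Nat.eq_zero_or_pos n with h | h
  · simp [h]
  · unfold digitSum
    rw [Nat.digits_def' (by norm_num) (by omega)]
    simp [Nat.mul_div_cancel_left _ two_pos, Nat.mul_mod_right]

lemma digitSum_two_mul_add_one (n : ℕ) : digitSum (2 * n + 1) = digitSum n + 1 := by
  unfold digitSum
  have h1 : (2 * n + 1) % 2 = 1 := by omega
  have h2 : (2 * n + 1) / 2 = n := by omega
  rw [Nat.digits_def' (by norm_num) (by omega), h1, h2]
  simp [Nat.add_comm]

lemma tmSign_two_mul (n : ℕ) : tmSign (2 * n) = tmSign n := by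
  simp [tmSign, digitSum_two_mul]

lemma tmSign_two_mul_add_one (n : ℕ) : tmSign (2 * n + 1) = -tmSign n := by
  simp [tmSign, digitSum_two_mul_add_one, pow_succ]

lemma tmSign_mul_self (n : ℕ) : tmSign n * tmSign n = 1 := by
  simp [tmSign, ← pow_add, ← two_mul, pow_mul]

lemma abs_tmSign (n : ℕ) : |tmSign n| = 1 := by
  simp [tmSign, abs_pow]


lemma S_zero (N : ℕ) : S 0 N = N := by
  unfold S
  simp [tmSign_mul_self]

lemma S_even (k N : ℕ) : S (2 * k) (2 * N) = 2 * S k N := by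
  induction N with
  | zero => simp [S]
  | succ n ih =>
    have h : 2 * (n + 1) = 2 * n + 1 + 1 := by ring
    rw [h]
    unfold S at *
    rw [sum_range_succ, sum_range_succ, ih, sum_range_succ]
    have e1 : 2 * n + 2 * k = 2 * (n + k) := by ring
    have e2 : 2 * n + 1 + 2 * k = 2 * (n + k) + 1 := by ring
    rw [e1, e2, tmSign_two_mul, tmSign_two_mul, tmSign_two_mul_add_one, tmSign_two_mul_add_one]
    ring

lemma S_odd (k N : ℕ) : S (2 * k + 1) (2 * N) = -(S k N + S (k + 1) N) := by
  induction N with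
  | zero => simp [S]
  | succ n ih =>
    have h : 2 * (n + 1) = 2 * n + 1 + 1 := by ring
    rw [h]
    unfold S at *
    rw [sum_range_succ, sum_range_succ, ih, sum_range_succ, sum_range_succ]
    have e1 : 2 * n + (2 * k + 1) = 2 * (n + k) + 1 := by ring
    have e2 : 2 * n + 1 + (2 * k + 1) = 2 * (n + k + 1) := by ring
    rw [e1, e2, tmSign_two_mul, tmSign_two_mul_add_one, tmSign_two_mul_add_one, tmSign_two_mul]
    have e3 : n + k + 1 = n + (k + 1) := by ring
    rw [e3]
    ring

noncomputable def eta : ℕ → ℝ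
  | 0 => 1
  | 1 => -(1/3)
  | (n+2) =>
    if h : (n + 2) % 2 = 0 then eta ((n + 2) / 2)
    else -(eta ((n + 2) / 2) + eta ((n + 2) / 2 + 1)) / 2
  termination_by n => n
  decreasing_by
  all_goals omega

lemma eta_zero : eta 0 = 1 := by simp [eta]
lemma eta_one : eta 1 = -(1/3) := by simp [eta]

lemma eta_even (k : ℕ) : eta (2 * k) = eta k := by
  match k with
  | 0 => rfl
  | (j + 1) =>
    have h : 2 * (j + 1) = (2 * j) + 2 := by ring
    rw [h, eta]
    have : (2 * j + 2) % 2 = 0 := by omega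
    rw [dif_pos this]
    congr 1
    omega

lemma eta_odd (k : ℕ) : eta (2 * k + 1) = -(eta k + eta (k + 1)) / 2 := by
  match k with
  | 0 => rw [eta_zero, eta_one]; norm_num [eta_one]
  | (j + 1) =>
    have h : 2 * (j + 1) + 1 = (2 * j + 1) + 2 := by ring
    rw [h, eta]
    have h2 : (2 * j + 1 + 2) % 2 = 0 → False := by omega
    rw [dif_neg h2]
    have e1 : (2 * j + 1 + 2) / 2 = j + 1 := by omega
    rw [e1]

lemma abs_eta_le_one (m : ℕ) : |eta m| ≤ 1 := by
  induction m using Nat.strong_induction_on with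
  | _ m ih =>
    match m with
    | 0 => rw [eta_zero]; norm_num
    | 1 => rw [eta_one, abs_neg, abs_of_nonneg (by norm_num)]; norm_num
    | (n + 2) =>
      rcases Nat.even_or_odd (n + 2) with ⟨k, hk⟩ | ⟨k, hk⟩
      · have hk' : n + 2 = 2 * k := by omega
        rw [hk', eta_even]
        exact ih k (by omega)
      · rw [hk, eta_odd]
        have h1 := ih k (by omega)
        have h2 := ih (k + 1) (by omega)
        rw [abs_div]
        rw [abs_neg] at *
        calc |eta k + eta (k+1)| / |(2:ℝ)| ≤ (|eta k| + |eta (k+1)|) / 2 := by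
              rw [abs_two]; gcongr; exact abs_add_le _ _
          _ ≤ 1 := by linarith

noncomputable def E (m N : ℕ) : ℝ := (S m N : ℝ) - N * eta m


lemma E_zero (N : ℕ) : E 0 N = 0 := by simp [E, S_zero, eta_zero]

lemma E_even (k N : ℕ) : E (2 * k) (2 * N) = 2 * E k N := by
  unfold E
  rw [S_even, eta_even]
  push_cast
  ring

lemma E_odd (k N : ℕ) : E (2 * k + 1) (2 * N) = -(E k N + E (k + 1) N) := by
  unfold E
  rw [S_odd, eta_odd]
  push_cast
  ring

lemma abs_S_term (i m : ℕ) : |(tmSign i * tmSign (i + m) : ℝ)| ≤ 1 := by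
  have := abs_tmSign i
  have := abs_tmSign (i + m)
  rw [abs_mul]
  push_cast
  rw [show |(tmSign i : ℝ)| = ((|tmSign i| : ℤ) : ℝ) by push_cast; ring,
      show |(tmSign (i+m) : ℝ)| = ((|tmSign (i+m)| : ℤ) : ℝ) by push_cast; ring]
  simp [abs_tmSign]

/-- boundary step: |E m N| ≤ |E m (2*(N/2))| + 2 -/
lemma E_step (m N : ℕ) : |E m N| ≤ |E m (2 * (N / 2))| + 2 := by
  rcases Nat.even_or_odd N with ⟨q, hq⟩ | ⟨q, hq⟩
  · have : 2 * (N / 2) = N := by omega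
    rw [this]
    nlinarith [abs_nonneg (E m N)]
  · have h2 : 2 * (N / 2) = 2 * q := by omega
    have hN : N = 2 * q + 1 := by omega
    rw [h2, hN]
    have hE : E m (2 * q + 1) = E m (2 * q) + ((tmSign (2*q) * tmSign (2*q + m) : ℤ) : ℝ) - eta m := by
      unfold E S
      rw [sum_range_succ]
      push_cast
      ring
    rw [hE]
    have h3 : |((tmSign (2*q) * tmSign (2*q + m) : ℤ) : ℝ)| ≤ 1 := by
      have := abs_S_term (2*q) m
      push_cast at this ⊢
      exact this
    have h4 := abs_eta_le_one m
    have hre : E m (2*q) + ((tmSign (2*q) * tmSign (2*q+m) : ℤ):ℝ) - eta m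
        = E m (2*q) + ((tmSign (2*q) * tmSign (2*q+m) : ℤ):ℝ) + (-eta m) := by ring
    rw [hre]
    refine le_trans (abs_add_three _ _ _) ?_
    rw [abs_neg]
    linarith

lemma E_m_zero (m : ℕ) : E m 0 = 0 := by simp [E, S]

lemma abs_E_one (m : ℕ) : |E m 1| ≤ 2 := by
  unfold E S
  rw [sum_range_succ]
  simp only [range_zero, sum_empty, zero_add, Nat.cast_one, one_mul]
  have h1 := abs_S_term 0 m
  have h2 := abs_eta_le_one m
  push_cast
  calc |(tmSign 0 : ℝ) * (tmSign m : ℝ) - eta m|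
      ≤ |(tmSign 0 : ℝ) * (tmSign m : ℝ)| + |eta m| := abs_sub _ _
    _ ≤ 2 := by push_cast at h1; simp only [zero_add] at h1; linarith


lemma log_succ (N : ℕ) (h : 2 ≤ N) : Nat.log 2 N = Nat.log 2 (N / 2) + 1 := by
  have h1 := Nat.log_div_base 2 N
  have h2 : 0 < Nat.log 2 N := Nat.log_pos (by norm_num) h
  omega

lemma E_one_bound (N : ℕ) : |E 1 N| ≤ 2 * (Nat.log 2 N + 1) := by
  induction N using Nat.strong_induction_on with
  | _ N ih =>
    match N, ih with
    | 0, _ => simp [E_m_zero]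
    | 1, _ => have := abs_E_one 1; simp; linarith [abs_E_one 1]
    | (n + 2), ih =>
      have h2 : 2 ≤ n + 2 := by omega
      have hq : (n + 2) / 2 < n + 2 := by omega
      have hstep := E_step 1 (n + 2)
      have h1 : (1 : ℕ) = 2 * 0 + 1 := rfl
      have hev : E 1 (2 * ((n+2)/2)) = -(E 0 ((n+2)/2) + E 1 ((n+2)/2)) := E_odd 0 _
      rw [hev, E_zero] at hstep
      simp only [zero_add, abs_neg] at hstep
      have hih := ih ((n+2)/2) hq
      rw [log_succ _ h2]
      push_cast
      linarith

lemma key (m : ℕ) : ∃ C : ℝ, 0 ≤ C ∧ ∀ N, |E m N| ≤ C * (Nat.log 2 N + 1) := by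
  induction m using Nat.strong_induction_on with
  | _ m ih =>
    match m, ih with
    | 0, _ => exact ⟨0, le_refl 0, fun N => by simp [E_zero]⟩
    | 1, _ => exact ⟨2, by norm_num, fun N => E_one_bound N⟩
    | (n + 2), ih =>
      rcases Nat.even_or_odd (n + 2) with ⟨k, hk⟩ | ⟨k, hk⟩
      · -- even, k ≥ 1
        have hk' : n + 2 = 2 * k := by omega
        obtain ⟨C, hC0, hC⟩ := ih k (by omega)
        refine ⟨2 * C + 2, by linarith, fun N => ?_⟩
        match N with
        | 0 => simp [E_m_zero]; positivity
        | 1 =>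
          have := abs_E_one (n + 2)
          simp only [Nat.log_one_right]
          push_cast
          linarith
        | (N + 2) =>
          have h2 : 2 ≤ N + 2 := by omega
          have hstep := E_step (n + 2) (N + 2)
          rw [hk'] at hstep ⊢
          rw [E_even] at hstep
          have hih := hC ((N + 2) / 2)
          rw [abs_mul, abs_two] at hstep
          rw [log_succ (N + 2) h2]
          push_cast
          have hlog : (0:ℝ) ≤ Nat.log 2 ((N+2)/2) := by positivity
          nlinarith
      · -- odd, n + 2 = 2k+1, k ≥ 1
        obtain ⟨C1, hC10, hC1⟩ := ih k (by omega)
        obtain ⟨C2, hC20, hC2⟩ := ih (k + 1) (by omega)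
        refine ⟨C1 + C2 + 2, by linarith, fun N => ?_⟩
        match N with
        | 0 => simp [E_m_zero]; positivity
        | 1 =>
          have := abs_E_one (n + 2)
          simp only [Nat.log_one_right]
          push_cast
          linarith
        | (N + 2) =>
          have h2 : 2 ≤ N + 2 := by omega
          have hstep := E_step (n + 2) (N + 2)
          rw [hk] at hstep ⊢
          rw [E_odd] at hstep
          have hih1 := hC1 ((N + 2) / 2)
          have hih2 := hC2 ((N + 2) / 2)
          rw [abs_neg] at hstep
          have htri := abs_add_le (E k ((N+2)/2)) (E (k+1) ((N+2)/2))
          rw [log_succ (N + 2) h2]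
          push_cast
          have hlog : (0:ℝ) ≤ Nat.log 2 ((N+2)/2) := by positivity
          nlinarith

/-- The second-order Thue-Morse autocorrelation limit exists for every `m`. -/
theorem tm_autocorrelation_exists (m : ℕ) :
    ∃ L : ℝ, Tendsto
      (fun N : ℕ => (1 / (N : ℝ)) * ∑ i ∈ range N, (tmSign i : ℝ) * (tmSign (i + m) : ℝ))
      atTop (nhds L) := by
  obtain ⟨C, hC0, hC⟩ := key m
  refine ⟨eta m, ?_⟩
  have hsum : ∀ N : ℕ, (∑ i ∈ range N, (tmSign i : ℝ) * (tmSign (i + m) : ℝ)) = ((S m N : ℤ) : ℝ) := by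
    intro N; unfold S; push_cast; ring
  -- show difference tends to 0
  have hdiff : Tendsto (fun N : ℕ =>
      (1 / (N : ℝ)) * ∑ i ∈ range N, (tmSign i : ℝ) * (tmSign (i + m) : ℝ) - eta m)
      atTop (nhds 0) := by
    apply squeeze_zero_norm' (a := fun N : ℕ => C / Real.log 2 * (Real.log N / N) + C / N)
    · filter_upwards [eventually_ge_atTop 1] with N hN
      have hN0 : (0:ℝ) < N := by exact_mod_cast hN
      have heq : (1 / (N : ℝ)) * ∑ i ∈ range N, (tmSign i : ℝ) * (tmSign (i + m) : ℝ) - eta m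
          = E m N / N := by
        rw [hsum]
        unfold E
        field_simp
      rw [heq, Real.norm_eq_abs, abs_div, abs_of_pos hN0]
      have h1 := hC N
      have h2 : (Nat.log 2 N : ℝ) ≤ Real.logb 2 N := Real.natLog_le_logb N 2
      have hlog2 : Real.log 2 ≠ 0 := ne_of_gt (Real.log_pos (by norm_num))
      calc |E m N| / N ≤ (C * (Nat.log 2 N + 1)) / N := (div_le_div_iff_of_pos_right hN0).mpr h1
        _ ≤ (C * (Real.logb 2 N + 1)) / N := by
            apply (div_le_div_iff_of_pos_right hN0).mpr
            apply mul_le_mul_of_nonneg_left (by linarith) hC0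
        _ = C / Real.log 2 * (Real.log N / N) + C / N := by
            rw [Real.logb]
            field_simp
    · have hlog : Tendsto (fun x : ℝ => Real.log x / x) atTop (nhds 0) := by
        have := Real.tendsto_pow_log_div_mul_add_atTop 1 0 1 one_ne_zero
        simpa using this
      have hlogn : Tendsto (fun N : ℕ => Real.log N / N) atTop (nhds 0) :=
        hlog.comp tendsto_natCast_atTop_atTop
      have t1 : Tendsto (fun N : ℕ => C / Real.log 2 * (Real.log N / N)) atTop (nhds 0) := by
        simpa using hlogn.const_mul (C / Real.log 2)
      have t2 : Tendsto (fun N : ℕ => C / (N:ℝ)) atTop (nhds 0) :=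
        tendsto_const_div_atTop_nhds_zero_nat C
      simpa using t1.add t2
  have := hdiff.add_const (eta m)
  simpa using this
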